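/- arXiv:math/0111101 — 3 statements merged into one kernel-verified Lean document; each statement's English description precedes it below -/
import Mathlib

section
/- Let R be a commutative ring, s a unit of R, and z = s - s⁻¹. Let a : ℕ → ℕ → R satisfy: for all i ≥ 1 and j ≥ 1, a i (j-1) - a (i-1) j = z * (a (i-1) 0) * (a 0 (j-1)). Define formal power series A(t) = 1 + z·∑_{m≥1} (a (m-1) 0)·t^m and Ā(t) = 1 - z·∑_{m≥1} (a 0 (m-1))·t^m in R[[t]]. Then A(t) · Ā(t) = 1; in particular A(t) is a unit of R[[t]] with inverse Ā(t). -/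
/-!
Write `A = 1 + z·t·P` and `Ā = 1 - z·t·Q` with `P = ∑ a m 0 tᵐ` and `Q = ∑ a 0 m tᵐ`. Then
`A·Ā = 1 + z·t·(P - Q - z·t·P·Q)`, and the skein relation telescopes along each antidiagonal
`i + j = n + 1` to `a (n+1) 0 - a 0 (n+1) = z ∑_{i+j=n} a i 0 · a 0 j`, which is exactly
`P - Q = z·t·P·Q`.
-/

open PowerSeries
open Finset.HasAntidiagonal (antidiagonal)

theorem sub_eq_mul_sum_antidiagonal_of_skein {R : Type*} [CommRing R] (z : R) (a : ℕ → ℕ → R)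
    (ha : ∀ i j, a (i + 1) j - a i (j + 1) = z * a i 0 * a 0 j) (n : ℕ) :
    a (n + 1) 0 - a 0 (n + 1) = z * ∑ p ∈ antidiagonal n, a p.1 0 * a 0 p.2 := by
  rw [Finset.Nat.sum_antidiagonal_eq_sum_range_succ (fun i j => a i 0 * a 0 j), Finset.mul_sum]
  have telescope := Finset.sum_range_sub (fun i => a i (n + 1 - i)) (n + 1)
  simp only [Nat.sub_self, Nat.sub_zero] at telescope
  rw [← telescope]
  refine Finset.sum_congr rfl fun i hi => ?_
  obtain ⟨k, rfl⟩ : ∃ k, n = i + k := ⟨n - i, by grind⟩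
  rw [show i + k + 1 - (i + 1) = k by omega, show i + k + 1 - i = k + 1 by omega,
    show i + k - i = k by omega, ha, mul_assoc]

theorem mk_sub_mk_eq_of_skein {R : Type*} [CommRing R] (z : R) (a : ℕ → ℕ → R)
    (ha : ∀ i j, a (i + 1) j - a i (j + 1) = z * a i 0 * a 0 j) :
    mk (a · 0) - mk (a 0 ·) = C z * X * mk (a · 0) * mk (a 0 ·) := by
  ext (_ | n)
  · simp
  · rw [mul_comm (C z), mul_assoc, mul_assoc, coeff_succ_X_mul, coeff_C_mul,
      coeff_mul, map_sub, coeff_mk, coeff_mk, sub_eq_mul_sum_antidiagonal_of_skein z a ha]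
    simp only [coeff_mk]

theorem mk_ite_eq_one_add_C_mul_X_mul {R : Type*} [CommRing R] (c : R) (f : ℕ → R) :
    mk (fun m => if m = 0 then 1 else c * f (m - 1)) = 1 + C c * X * mk f := by
  ext (_ | n)
  · simp
  · rw [map_add, mul_comm (C c), mul_assoc, coeff_succ_X_mul, coeff_C_mul]
    simp

theorem power_sums_homfly_stmt1_general {R : Type*} [CommRing R] (z : R)
    (a : ℕ → ℕ → R)
    (ha : ∀ i j : ℕ, 1 ≤ i → 1 ≤ j →
      a i (j - 1) - a (i - 1) j = z * a (i - 1) 0 * a 0 (j - 1))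
    (A Abar : PowerSeries R)
    (hA : A = PowerSeries.mk fun m => if m = 0 then 1 else z * a (m - 1) 0)
    (hAbar : Abar = PowerSeries.mk fun m => if m = 0 then 1 else -(z * a 0 (m - 1))) :
    A * Abar = 1 ∧ IsUnit A := by
  have skein : ∀ i j, a (i + 1) j - a i (j + 1) = z * a i 0 * a 0 j := fun i j => by
    simpa using ha (i + 1) (j + 1) (by omega) (by omega)
  simp_rw [← neg_mul] at hAbar
  have hmul : A * Abar = 1 := by
    rw [hA.trans (mk_ite_eq_one_add_C_mul_X_mul z (a · 0)),
      hAbar.trans (mk_ite_eq_one_add_C_mul_X_mul (-z) (a 0 ·)), map_neg]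
    linear_combination C z * X * mk_sub_mk_eq_of_skein z a skein
  exact ⟨hmul, .of_mul_eq_one _ hmul⟩

/-- Corollary 6 of the paper, abstracted: with the skein relation hypothesis on
`a`, the generating series `A(t) = 1 + z·∑_{m≥1} a (m-1) 0 · t^m` and
`Ā(t) = 1 - z·∑_{m≥1} a 0 (m-1) · t^m` satisfy `A(t)·Ā(t) = 1`; in particular
`A(t)` is a unit of `R⟦t⟧` (with inverse `Ā(t)`). -/
theorem power_sums_homfly_stmt1 {R : Type*} [CommRing R] (s : Rˣ) (z : R)
    (hz : z = (s : R) - ((s⁻¹ : Rˣ) : R))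
    (a : ℕ → ℕ → R)
    (ha : ∀ i j : ℕ, 1 ≤ i → 1 ≤ j →
      a i (j - 1) - a (i - 1) j = z * a (i - 1) 0 * a 0 (j - 1))
    (A Abar : PowerSeries R)
    (hA : A = PowerSeries.mk fun m => if m = 0 then 1 else z * a (m - 1) 0)
    (hAbar : Abar = PowerSeries.mk fun m => if m = 0 then 1 else -(z * a 0 (m - 1))) :
    A * Abar = 1 ∧ IsUnit A :=
  power_sums_homfly_stmt1_general z a ha A Abar hA hAbar
end

section
/- Let R be a commutative ring, s a unit of R, and z = s - s⁻¹. Let a : ℕ → ℕ → R satisfy: for all i ≥ 1 and j ≥ 1, a i (j-1) - a (i-1) j = z * (a (i-1) 0) * (a 0 (j-1)). For m ≥ 1 define Π_m = ∑_{i=0}^{m-1} a i (m-1-i). Then for every m ≥ 1, Π_m = m · (a (m-1) 0) - z · ∑_{i=1}^{m-1} i · (a (i-1) 0) · (a 0 (m-i-1)). -/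
/-!
The skein relation `a (i+1) j = a i (j+1) + z · a i 0 · a 0 j` lets one walk along the antidiagonal
`i + j = n` from `a n 0` to any `a i (n-i)`, picking up one correction term `z · a p 0 · a 0 (n-1-p)`
for each `p ∈ [i, n)`. Summing over the antidiagonal, the correction at `p` is collected by the
`p + 1` entries with `i ≤ p`, which gives the weights in the second sum.
-/

section

open Finset

variable {R : Type*} [CommRing R]

theorem sum_range_succ_sum_Ico (f : ℕ → R) (n : ℕ) :
    ∑ i ∈ range (n + 1), ∑ p ∈ Ico i n, f p = ∑ p ∈ range n, ((p : R) + 1) * f p := by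
  rw [sum_comm' (t' := range n) (s' := fun p => range (p + 1))]
  · simp [sum_const, card_range, nsmul_eq_mul]
  · intro i p
    simp only [mem_range, mem_Ico]
    omega

theorem apply_eq_sub_mul_sum_Ico {z : R} {a : ℕ → ℕ → R}
    (ha : ∀ i j, a (i + 1) j - a i (j + 1) = z * a i 0 * a 0 j) (i j : ℕ) :
    a i j = a (i + j) 0 - z * ∑ p ∈ Ico i (i + j), a p 0 * a 0 (i + j - 1 - p) := by
  induction j generalizing i with
  | zero => simp
  | succ j ih =>
    have hstep : a i (j + 1) = a (i + 1) j - z * a i 0 * a 0 j := by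
      linear_combination -(ha i j)
    rw [hstep, ih (i + 1), sum_eq_sum_Ico_succ_bot (by omega : i < i + (j + 1)),
      show i + 1 + j = i + (j + 1) by omega, show i + (j + 1) - 1 - i = j by omega]
    ring

end

theorem power_sums_homfly_stmt3_general {R : Type*} [CommRing R] (z : R)
    (a : ℕ → ℕ → R)
    (ha : ∀ i j : ℕ, 1 ≤ i → 1 ≤ j →
      a i (j - 1) - a (i - 1) j = z * a (i - 1) 0 * a 0 (j - 1))
    (m : ℕ) :
    ∑ i ∈ Finset.range m, a i (m - 1 - i)
      = (m : R) * a (m - 1) 0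
        - z * ∑ i ∈ Finset.Icc 1 (m - 1), (i : R) * a (i - 1) 0 * a 0 (m - i - 1) := by
  have hskein : ∀ i j, a (i + 1) j - a i (j + 1) = z * a i 0 * a 0 j := fun i j => by
    simpa using ha (i + 1) (j + 1) (by omega) (by omega)
  rcases m with _ | n
  · simp
  have hdiag : ∀ i ∈ Finset.range (n + 1), a i (n + 1 - 1 - i)
      = a n 0 - z * ∑ p ∈ Finset.Ico i n, a p 0 * a 0 (n - 1 - p) := by
    intro i hi
    have hsum : i + (n - i) = n := by simp only [Finset.mem_range] at hi; omega
    simpa only [Nat.add_sub_cancel, hsum] using apply_eq_sub_mul_sum_Ico hskein i (n - i)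
  have hweights : ∑ i ∈ Finset.Icc 1 (n + 1 - 1), (i : R) * a (i - 1) 0 * a 0 (n + 1 - i - 1)
      = ∑ p ∈ Finset.range n, ((p : R) + 1) * (a p 0 * a 0 (n - 1 - p)) := by
    rw [Nat.add_sub_cancel, ← Finset.Ico_add_one_right_eq_Icc, Finset.sum_Ico_eq_sum_range,
      Nat.add_sub_cancel]
    refine Finset.sum_congr rfl fun p _ => ?_
    rw [show 1 + p - 1 = p by omega, show n + 1 - (1 + p) - 1 = n - 1 - p by omega]
    push_cast
    ring
  rw [Finset.sum_congr rfl hdiag, Finset.sum_sub_distrib, ← Finset.mul_sum,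
    sum_range_succ_sum_Ico, hweights]
  simp

/-- Intermediate identity in the proof of Theorem 7 of the paper, abstracted:
with the skein relation hypothesis on `a`, for `m ≥ 1` the braid sum
`Π_m = ∑_{i=0}^{m-1} a i (m-1-i)` satisfies
`Π_m = m · a (m-1) 0 - z · ∑_{i=1}^{m-1} i · a (i-1) 0 · a 0 (m-i-1)`. -/
theorem power_sums_homfly_stmt3 {R : Type*} [CommRing R] (s : Rˣ) (z : R)
    (hz : z = (s : R) - ((s⁻¹ : Rˣ) : R))
    (a : ℕ → ℕ → R)
    (ha : ∀ i j : ℕ, 1 ≤ i → 1 ≤ j →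
      a i (j - 1) - a (i - 1) j = z * a (i - 1) 0 * a 0 (j - 1))
    (m : ℕ) (hm : 1 ≤ m) :
    ∑ i ∈ Finset.range m, a i (m - 1 - i)
      = (m : R) * a (m - 1) 0
        - z * ∑ i ∈ Finset.Icc 1 (m - 1), (i : R) * a (i - 1) 0 * a 0 (m - i - 1) :=
  power_sums_homfly_stmt3_general z a ha m
end

section
/- Let R be a commutative ring, s a unit of R, and z = s - s⁻¹. Let a : ℕ → ℕ → R satisfy: for all i ≥ 1 and j ≥ 1, a i (j-1) - a (i-1) j = z * (a (i-1) 0) * (a 0 (j-1)). Define formal power series A(t) = 1 + z·∑_{m≥1} (a (m-1) 0)·t^m and Ā(t) = 1 - z·∑_{m≥1} (a 0 (m-1))·t^m in R[[t]], and for m ≥ 1 set Π_m = ∑_{i=0}^{m-1} a i (m-1-i). Then z · ∑_{m≥1} Π_m t^{m-1} = A'(t) · Ā(t), where A'(t) is the formal derivative of A(t). -/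
/-!
Compare coefficients of `t^n`. Put `f k = a k (n - k)`. For `k < n` the skein relation turns the
product `A'_k · Ā_{n-k}` into `-z (k + 1) (f (k + 1) - f k)`, and summation by parts collapses
these terms, together with the remaining one `A'_n = z (n + 1) f n`, to `z ∑_{k ≤ n} f k`.
-/

open PowerSeries Finset

theorem sum_range_succ_nsmul_sub {M : Type*} [AddCommGroup M] (f : ℕ → M) (n : ℕ) :
    ∑ k ∈ range n, (k + 1) • (f (k + 1) - f k) = (n + 1) • f n - ∑ k ∈ range (n + 1), f k := by
  induction n with
  | zero => simp
  | succ n ih =>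
    rw [sum_range_succ, ih, sum_range_succ _ (n + 1), succ_nsmul _ (n + 1), smul_sub]
    abel

theorem power_sums_homfly_stmt4_general {R : Type*} [CommRing R] (z : R)
    (a : ℕ → ℕ → R)
    (ha : ∀ i j : ℕ, 1 ≤ i → 1 ≤ j →
      a i (j - 1) - a (i - 1) j = z * a (i - 1) 0 * a 0 (j - 1))
    (A Abar : PowerSeries R)
    (hA : A = PowerSeries.mk fun m => if m = 0 then 1 else z * a (m - 1) 0)
    (hAbar : Abar = PowerSeries.mk fun m => if m = 0 then 1 else -(z * a 0 (m - 1))) :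
    PowerSeries.mk (fun n => z * ∑ i ∈ Finset.range (n + 1), a i (n - i))
      = (PowerSeries.derivative R A) * Abar := by
  ext n
  have hA' (k : ℕ) : coeff k (derivative R A) = z * a k 0 * (k + 1) := by
    simp [hA, coeff_derivative]
  have hterm (k : ℕ) (hk : k < n) : coeff k (derivative R A) * coeff (n - k) Abar
      = -z * (k + 1) • (a (k + 1) (n - (k + 1)) - a k (n - k)) := by
    have skein := ha (k + 1) (n - k) (by omega) (by omega)
    rw [Nat.add_sub_cancel, Nat.sub_sub] at skein
    rw [hA', hAbar, coeff_mk, if_neg (by omega), Nat.sub_sub, skein, nsmul_eq_mul]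
    push_cast
    ring
  rw [coeff_mk, coeff_mul, Nat.sum_antidiagonal_eq_sum_range_succ_mk]
  conv_rhs =>
    rw [sum_range_succ, sum_congr rfl fun k hk => hterm k (mem_range.mp hk), ← mul_sum,
      sum_range_succ_nsmul_sub (fun i => a i (n - i)), hA', hAbar, coeff_mk]
  simp only [Nat.sub_self, if_true, nsmul_eq_mul]
  push_cast
  ring

/-- The generating-function identity (equation (1) in the proof of Theorem 7 of
the paper), abstracted: with the skein relation hypothesis on `a`, setting
`Π_m = ∑_{i=0}^{m-1} a i (m-1-i)`, the series `z·∑_{m≥1} Π_m t^{m-1}` equals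
`A'(t)·Ā(t)`, where `A(t) = 1 + z·∑_{m≥1} a (m-1) 0 · t^m`,
`Ā(t) = 1 - z·∑_{m≥1} a 0 (m-1) · t^m` and `A'` is the formal derivative. -/
theorem power_sums_homfly_stmt4 {R : Type*} [CommRing R] (s : Rˣ) (z : R)
    (hz : z = (s : R) - ((s⁻¹ : Rˣ) : R))
    (a : ℕ → ℕ → R)
    (ha : ∀ i j : ℕ, 1 ≤ i → 1 ≤ j →
      a i (j - 1) - a (i - 1) j = z * a (i - 1) 0 * a 0 (j - 1))
    (A Abar : PowerSeries R)
    (hA : A = PowerSeries.mk fun m => if m = 0 then 1 else z * a (m - 1) 0)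
    (hAbar : Abar = PowerSeries.mk fun m => if m = 0 then 1 else -(z * a 0 (m - 1))) :
    PowerSeries.mk (fun n => z * ∑ i ∈ Finset.range (n + 1), a i (n - i))
      = (PowerSeries.derivative R A) * Abar :=
  power_sums_homfly_stmt4_general z a ha A Abar hA hAbar
end
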